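/- arXiv:2502.16607 — 6 statements merged into one kernel-verified Lean document; each statement's English description precedes it below -/
import Mathlib

section
/- CVaR is a coherent risk measure: for β ∈ [0,1), CVaR_β(ξ) := inf_{t∈ℝ} { t + (1/(1-β)) E[(ξ - t)₊] } on integrable random variables satisfies monotonicity, translation invariance (CVaR_β(ξ + c) = CVaR_β(ξ) + c), positive homogeneity (CVaR_β(λξ) = λ CVaR_β(ξ) for λ ≥ 0), and subadditivity (CVaR_β(ξ + ζ) ≤ CVaR_β(ξ) + CVaR_β(ζ)). -/
open MeasureTheory Real

/-- Conditional value-at-risk via the Rockafellar–Uryasev formula. -/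
noncomputable def CVaR {Ω : Type*} [MeasurableSpace Ω]
    (μ : MeasureTheory.Measure Ω) (β : ℝ) (ξ : Ω → ℝ) : ℝ :=
  ⨅ t : ℝ, (t + (1 / (1 - β)) * ∫ ω, max (ξ ω - t) 0 ∂μ)

/-- The Rockafellar–Uryasev objective function. -/
noncomputable def cvarF {Ω : Type*} [MeasurableSpace Ω]
    (μ : MeasureTheory.Measure Ω) (β : ℝ) (η : Ω → ℝ) (t : ℝ) : ℝ :=
  t + (1 / (1 - β)) * ∫ ω, max (η ω - t) 0 ∂μ

section aux

variable {Ω : Type*} [MeasurableSpace Ω] {μ : Measure Ω}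

lemma CVaR_eq (β : ℝ) (η : Ω → ℝ) : CVaR μ β η = ⨅ t : ℝ, cvarF μ β η t := rfl

lemma cvar_int [IsFiniteMeasure μ] {η : Ω → ℝ} (hη : Integrable η μ) (t : ℝ) :
    Integrable (fun ω => max (η ω - t) 0) μ :=
  (hη.sub (integrable_const t)).pos_part

lemma cvarF_lb [IsProbabilityMeasure μ] {β : ℝ} (hβ : β ∈ Set.Ico (0 : ℝ) 1)
    {η : Ω → ℝ} (hη : Integrable η μ) (t : ℝ) :
    ∫ ω, η ω ∂μ ≤ cvarF μ β η t := by
  have h1 : (0 : ℝ) < 1 - β := by linarith [hβ.2]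
  have hc : (1 : ℝ) ≤ 1 / (1 - β) := by
    rw [le_div_iff₀ h1]; linarith [hβ.1]
  have hint := cvar_int hη t
  have h2 : ∫ ω, η ω ∂μ - t ≤ ∫ ω, max (η ω - t) 0 ∂μ := by
    have h3 : ∫ ω, (η ω - t) ∂μ ≤ ∫ ω, max (η ω - t) 0 ∂μ :=
      integral_mono (hη.sub (integrable_const t)) hint (fun ω => le_max_left _ _)
    have h4 : ∫ ω, (η ω - t) ∂μ = (∫ ω, η ω ∂μ) - t := by
      rw [integral_sub hη (integrable_const t), integral_const]
      simp [measure_univ]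
    linarith [h3, h4.symm.le, h4.le]
  have h3 : 0 ≤ ∫ ω, max (η ω - t) 0 ∂μ :=
    integral_nonneg fun ω => le_max_right _ _
  unfold cvarF
  nlinarith [h2, h3, hc]

lemma cvarF_bdd [IsProbabilityMeasure μ] {β : ℝ} (hβ : β ∈ Set.Ico (0 : ℝ) 1)
    {η : Ω → ℝ} (hη : Integrable η μ) :
    BddBelow (Set.range (cvarF μ β η)) := by
  refine ⟨∫ ω, η ω ∂μ, ?_⟩
  rintro x ⟨t, rfl⟩
  exact cvarF_lb hβ hη t

end aux

/-- CVaR is a coherent risk measure: monotone, translation invariant,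
positively homogeneous and subadditive. -/
theorem cvar_coherent
    {Ω : Type*} [MeasurableSpace Ω] (μ : Measure Ω) [IsProbabilityMeasure μ]
    (β : ℝ) (hβ : β ∈ Set.Ico (0 : ℝ) 1)
    (ξ ζ : Ω → ℝ) (hξm : Measurable ξ) (hζm : Measurable ζ)
    (hξ : Integrable ξ μ) (hζ : Integrable ζ μ) :
    ((∀ᵐ ω ∂μ, ξ ω ≤ ζ ω) → CVaR μ β ξ ≤ CVaR μ β ζ) ∧
    (∀ c : ℝ, CVaR μ β (fun ω => ξ ω + c) = CVaR μ β ξ + c) ∧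
    (∀ l : ℝ, 0 ≤ l → CVaR μ β (fun ω => l * ξ ω) = l * CVaR μ β ξ) ∧
    (CVaR μ β (fun ω => ξ ω + ζ ω) ≤ CVaR μ β ξ + CVaR μ β ζ) := by
  have h1 : (0 : ℝ) < 1 - β := by linarith [hβ.2]
  have hcpos : (0 : ℝ) ≤ 1 / (1 - β) := by positivity
  refine ⟨?_, ?_, ?_, ?_⟩
  · -- monotonicity
    intro h
    rw [CVaR_eq, CVaR_eq]
    refine ciInf_mono (cvarF_bdd hβ hξ) fun t => ?_
    unfold cvarF
    have hint : ∫ ω, max (ξ ω - t) 0 ∂μ ≤ ∫ ω, max (ζ ω - t) 0 ∂μ := by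
      refine integral_mono_ae (cvar_int hξ t) (cvar_int hζ t) ?_
      filter_upwards [h] with ω hω
      exact max_le_max (by linarith) le_rfl
    exact add_le_add_right (mul_le_mul_of_nonneg_left hint hcpos) t
  · -- translation invariance
    intro c
    have hξc : Integrable (fun ω => ξ ω + c) μ := hξ.add (integrable_const c)
    have key : ∀ t : ℝ, cvarF μ β (fun ω => ξ ω + c) t = cvarF μ β ξ (t - c) + c := by
      intro t
      unfold cvarF
      have hfun : (fun ω => max (ξ ω + c - t) 0) = fun ω => max (ξ ω - (t - c)) 0 := by
        funext ω; ring_nf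
      rw [hfun]; ring
    rw [CVaR_eq, CVaR_eq]
    apply le_antisymm
    · rw [← sub_le_iff_le_add]
      refine le_ciInf fun t => ?_
      rw [sub_le_iff_le_add]
      have := ciInf_le (cvarF_bdd hβ hξc) (t + c)
      rwa [key (t + c), add_sub_cancel_right] at this
    · refine le_ciInf fun t => ?_
      rw [key t]
      exact add_le_add_left (ciInf_le (cvarF_bdd hβ hξ) (t - c)) c
  · -- positive homogeneity
    intro l hl
    rcases eq_or_lt_of_le hl with rfl | hl
    · simp only [zero_mul]
      have h0 : Integrable (fun _ : Ω => (0 : ℝ)) μ := integrable_const 0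
      rw [CVaR_eq]
      apply le_antisymm
      · refine (ciInf_le (cvarF_bdd hβ h0) 0).trans ?_
        simp [cvarF]
      · refine le_ciInf fun t => ?_
        have := cvarF_lb hβ h0 t
        simpa using this
    · have hlξ : Integrable (fun ω => l * ξ ω) μ := hξ.const_mul l
      have key : ∀ t : ℝ, cvarF μ β (fun ω => l * ξ ω) (l * t) = l * cvarF μ β ξ t := by
        intro t
        unfold cvarF
        have hfun : (fun ω => max (l * ξ ω - l * t) 0) = fun ω => l * max (ξ ω - t) 0 := by
          funext ω
          rw [mul_max_of_nonneg _ _ hl.le, mul_zero, mul_sub]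
        rw [hfun, integral_const_mul]
        ring
      rw [CVaR_eq, CVaR_eq]
      apply le_antisymm
      · have hdiv : (⨅ t : ℝ, cvarF μ β (fun ω => l * ξ ω) t) / l ≤ ⨅ t : ℝ, cvarF μ β ξ t := by
          refine le_ciInf fun t => ?_
          rw [div_le_iff₀ hl, mul_comm]
          have := ciInf_le (cvarF_bdd hβ hlξ) (l * t)
          rwa [key t] at this
        calc (⨅ t : ℝ, cvarF μ β (fun ω => l * ξ ω) t)
            = l * ((⨅ t : ℝ, cvarF μ β (fun ω => l * ξ ω) t) / l) := by
              field_simp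
          _ ≤ l * ⨅ t : ℝ, cvarF μ β ξ t := by
              exact mul_le_mul_of_nonneg_left hdiv hl.le
      · refine le_ciInf fun t => ?_
        have ht : cvarF μ β (fun ω => l * ξ ω) t = l * cvarF μ β ξ (t / l) := by
          rw [← key (t / l), mul_div_cancel₀ _ (ne_of_gt hl)]
        rw [ht]
        exact mul_le_mul_of_nonneg_left (ciInf_le (cvarF_bdd hβ hξ) (t / l)) hl.le
  · -- subadditivity
    have hsum : Integrable (fun ω => ξ ω + ζ ω) μ := hξ.add hζ
    rw [CVaR_eq, CVaR_eq, CVaR_eq, ← sub_le_iff_le_add]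
    refine le_ciInf fun s => ?_
    rw [sub_le_iff_le_add, add_comm, ← sub_le_iff_le_add]
    refine le_ciInf fun t => ?_
    rw [sub_le_iff_le_add]
    have h0 := ciInf_le (cvarF_bdd hβ hsum) (s + t)
    refine h0.trans ?_
    unfold cvarF
    have hint : ∫ ω, max (ξ ω + ζ ω - (s + t)) 0 ∂μ
        ≤ ∫ ω, (max (ξ ω - s) 0 + max (ζ ω - t) 0) ∂μ := by
      refine integral_mono (cvar_int hsum (s + t)) ((cvar_int hξ s).add (cvar_int hζ t))
        fun ω => ?_
      have heq : ξ ω + ζ ω - (s + t) = (ξ ω - s) + (ζ ω - t) := by ring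
      rw [heq]
      refine max_le (add_le_add (le_max_left _ _) (le_max_left _ _)) ?_
      exact add_nonneg (le_max_right _ _) (le_max_right _ _)
    rw [integral_add (cvar_int hξ s) (cvar_int hζ t)] at hint
    nlinarith [hint, hcpos]
end

section
/- Expectation of CVaR identity via interchange: for bounded random variables X, Y and a bounded measurable function f(x,y), E_X[ CVaR_β(f(X,Y) | X) ] = inf over bounded measurable functions t : 𝒳 → ℝ of E[ t(X) + (1/(1-β)) ( f(X,Y) − t(X) )₊ ], where CVaR_β(·|X=x) is computed under the conditional distribution of Y given X = x. -/
open MeasureTheory Real ProbabilityTheory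

namespace CVaRAux

variable {𝒳 𝒴 : Type*} [MeasurableSpace 𝒳] [MeasurableSpace 𝒴]
  {κ : Kernel 𝒳 𝒴} {f : 𝒳 → 𝒴 → ℝ} {c : ℝ} {C : ℝ}

/-- The Rockafellar–Uryasev objective. -/
noncomputable def RU (κ : Kernel 𝒳 𝒴) (f : 𝒳 → 𝒴 → ℝ) (c : ℝ) (x : 𝒳) (t : ℝ) : ℝ :=
  t + c * ∫ y, max (f x y - t) 0 ∂(κ x)

lemma meas_inner (hf : Measurable (Function.uncurry f)) (t : ℝ) (x : 𝒳) :
    Measurable (fun y => max (f x y - t) 0) := by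
  have h1 : Measurable (fun y => f x y) := hf.comp measurable_prodMk_left
  exact (h1.sub measurable_const).max measurable_const

lemma integrable_inner [IsMarkovKernel κ] (hf : Measurable (Function.uncurry f))
    (hC : ∀ x y, |f x y| ≤ C) (t : ℝ) (x : 𝒳) :
    Integrable (fun y => max (f x y - t) 0) (κ x) := by
  refine (integrable_const (|C| + |t|)).mono' (meas_inner hf t x).aestronglyMeasurable ?_
  refine Filter.Eventually.of_forall fun y => ?_
  have h2 := abs_le.1 (hC x y)
  rw [Real.norm_eq_abs, abs_of_nonneg (le_max_right _ _)]
  have h3 : f x y - t ≤ |C| + |t| := by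
    have := neg_abs_le t
    have := le_abs_self C
    linarith [h2.2]
  simp only [max_le_iff]
  exact ⟨h3, by positivity⟩

lemma integral_inner_nonneg (t : ℝ) (x : 𝒳) :
    0 ≤ ∫ y, max (f x y - t) 0 ∂(κ x) :=
  integral_nonneg fun _ => le_max_right _ _

lemma integrable_f [IsMarkovKernel κ] (hf : Measurable (Function.uncurry f))
    (hC : ∀ x y, |f x y| ≤ C) (x : 𝒳) : Integrable (fun y => f x y) (κ x) := by
  refine (integrable_const C).mono' (hf.comp measurable_prodMk_left).aestronglyMeasurable ?_
  exact Filter.Eventually.of_forall fun y => hC x y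

/-- lower bound on RU -/
lemma RU_lower [IsMarkovKernel κ] (hf : Measurable (Function.uncurry f))
    (hC : ∀ x y, |f x y| ≤ C) (hc : 1 ≤ c) (x : 𝒳) (t : ℝ) : -C ≤ RU κ f c x t := by
  rcases le_or_gt (-C) t with h | h
  · have h0 := integral_inner_nonneg (κ := κ) (f := f) t x
    have : t ≤ RU κ f c x t := by
      unfold RU; nlinarith
    linarith
  · have hle : -C - t ≤ ∫ y, max (f x y - t) 0 ∂(κ x) := by
      have h4 : ∫ _, ((-C - t : ℝ)) ∂(κ x) = -C - t := by
        simp [measure_univ]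
      rw [← h4]
      refine integral_mono (integrable_const _) (integrable_inner hf hC t x) fun y => ?_
      have h1 := (abs_le.1 (hC x y)).1
      have h5 : -C - t ≤ f x y - t := by linarith
      exact h5.trans (le_max_left _ _)
    unfold RU
    nlinarith [hle]

lemma RU_at_C (hC : ∀ x y, |f x y| ≤ C) (x : 𝒳) : RU κ f c x C = C := by
  unfold RU
  have : ∀ y, max (f x y - C) 0 = 0 := fun y =>
    max_eq_right (by linarith [(abs_le.1 (hC x y)).2])
  simp [this]

lemma RU_high (hC : ∀ x y, |f x y| ≤ C) (x : 𝒳) {t : ℝ} (ht : C ≤ t) : RU κ f c x t = t := by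
  unfold RU
  have : ∀ y, max (f x y - t) 0 = 0 := fun y =>
    max_eq_right (by linarith [(abs_le.1 (hC x y)).2])
  simp [this]

lemma RU_low [IsMarkovKernel κ] (hf : Measurable (Function.uncurry f))
    (hC : ∀ x y, |f x y| ≤ C) (hc : 1 ≤ c) (x : 𝒳) {t : ℝ} (ht : t ≤ -C) :
    RU κ f c x (-C) ≤ RU κ f c x t := by
  have hform : ∀ s : ℝ, s ≤ -C →
      RU κ f c x s = (1 - c) * s + c * ∫ y, f x y ∂(κ x) := by
    intro s hs
    unfold RU
    have : ∀ y, max (f x y - s) 0 = f x y - s := fun y =>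
      max_eq_left (by linarith [(abs_le.1 (hC x y)).1])
    rw [integral_congr_ae (Filter.Eventually.of_forall this),
      integral_sub (integrable_f hf hC x) (integrable_const _)]
    simp [measure_univ]
    ring
  rw [hform t ht, hform (-C) le_rfl]
  nlinarith [ht]

lemma RU_lip [IsMarkovKernel κ] (hf : Measurable (Function.uncurry f))
    (hC : ∀ x y, |f x y| ≤ C) (hc : 1 ≤ c) (x : 𝒳) (s t : ℝ) :
    RU κ f c x t ≤ RU κ f c x s + (1 + c) * |t - s| := by
  have hint : ∫ y, max (f x y - t) 0 ∂(κ x)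
      ≤ (∫ y, max (f x y - s) 0 ∂(κ x)) + |t - s| := by
    have h4 : ∫ y, (max (f x y - s) 0 + |t - s|) ∂(κ x)
        = (∫ y, max (f x y - s) 0 ∂(κ x)) + |t - s| := by
      rw [integral_add (integrable_inner hf hC s x) (integrable_const _)]
      simp [measure_univ]
    rw [← h4]
    refine integral_mono (integrable_inner hf hC t x)
      ((integrable_inner hf hC s x).add (integrable_const _)) fun y => ?_
    have h := abs_max_sub_max_le_abs (f x y - t) (f x y - s) 0
    have h2 : |(f x y - t) - (f x y - s)| = |s - t| := by ring_nf
    rw [h2] at h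
    have h3 := (abs_le.1 h).2
    rw [abs_sub_comm] at h3
    linarith
  unfold RU
  have habs : t ≤ s + |t - s| := by
    have := le_abs_self (t - s); linarith
  have hc0 : (0:ℝ) ≤ c := by linarith
  nlinarith [mul_le_mul_of_nonneg_left hint hc0, abs_nonneg (t - s)]

/-- measurability of x ↦ RU x (t x) for measurable t -/
lemma RU_meas [IsMarkovKernel κ] (hf : Measurable (Function.uncurry f))
    {t : 𝒳 → ℝ} (ht : Measurable t) : Measurable (fun x => RU κ f c x (t x)) := by
  have h1 : Measurable (Function.uncurry fun x y => max (f x y - t x) 0) :=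
    (hf.sub (ht.comp measurable_fst)).max measurable_const
  have h2 : StronglyMeasurable (fun x => ∫ y, max (f x y - t x) 0 ∂(κ x)) :=
    MeasureTheory.StronglyMeasurable.integral_kernel_prod_right h1.stronglyMeasurable
  exact ht.add (h2.measurable.const_mul c)

/-- inner integral identity -/
lemma inner_integral_eq [IsMarkovKernel κ] (hf : Measurable (Function.uncurry f))
    (hC : ∀ x y, |f x y| ≤ C) (x : 𝒳) (t : ℝ) :
    ∫ y, (t + c * max (f x y - t) 0) ∂(κ x) = RU κ f c x t := by
  rw [integral_add (integrable_const _) ((integrable_inner hf hC t x).const_mul c),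
    MeasureTheory.integral_const_mul]
  simp [RU, measure_univ]

end CVaRAux
/-- Expectation-of-CVaR interchange identity: the expectation (over the
covariate) of the conditional CVaR equals the infimum, over bounded
measurable selections `t : 𝒳 → ℝ`, of the joint expectation of the
Rockafellar–Uryasev objective. -/
theorem expected_cvar_interchange
    {𝒳 𝒴 : Type*} [MeasurableSpace 𝒳] [MeasurableSpace 𝒴]
    (PX : Measure 𝒳) [IsProbabilityMeasure PX]
    (κ : Kernel 𝒳 𝒴) [IsMarkovKernel κ]
    (f : 𝒳 → 𝒴 → ℝ) (hf : Measurable (Function.uncurry f))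
    (C : ℝ) (hC : ∀ x y, |f x y| ≤ C)
    (β : ℝ) (hβ : β ∈ Set.Ico (0 : ℝ) 1) :
    (∫ x, (⨅ t : ℝ, (t + (1 / (1 - β)) * ∫ y, max (f x y - t) 0 ∂(κ x))) ∂PX)
      = ⨅ t : {t : 𝒳 → ℝ // Measurable t ∧ ∃ D, ∀ x, |t x| ≤ D},
          ∫ p, (t.1 p.1 + (1 / (1 - β)) * max (f p.1 p.2 - t.1 p.1) 0)
            ∂(PX.compProd κ) := by
  classical
  obtain ⟨hβ0, hβ1⟩ := hβ
  set c : ℝ := 1 / (1 - β) with hcdef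
  have h1β : (0:ℝ) < 1 - β := by linarith
  have hc : 1 ≤ c := by
    rw [hcdef, le_div_iff₀ h1β]; linarith
  have hc0 : (0:ℝ) < c := lt_of_lt_of_le one_pos hc
  -- nonemptiness and C ≥ 0
  have h𝒳 : Nonempty 𝒳 := by
    by_contra h
    rw [not_nonempty_iff] at h
    have h1 : PX Set.univ = 1 := measure_univ
    rw [Set.univ_eq_empty_iff.2 h, measure_empty] at h1
    exact zero_ne_one h1
  obtain ⟨x₀⟩ := h𝒳
  have h𝒴 : Nonempty 𝒴 := by
    by_contra h
    rw [not_nonempty_iff] at h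
    have h1 : (κ x₀) Set.univ = 1 := measure_univ
    rw [Set.univ_eq_empty_iff.2 h, measure_empty] at h1
    exact zero_ne_one h1
  obtain ⟨y₀⟩ := h𝒴
  have hC0 : (0:ℝ) ≤ C := (abs_nonneg _).trans (hC x₀ y₀)
  -- rewrite in terms of RU
  set g : 𝒳 → ℝ := fun x => ⨅ t : ℝ, CVaRAux.RU κ f c x t with hgdef
  have hLHS : (∫ x, (⨅ t : ℝ, (t + (1 / (1 - β)) * ∫ y, max (f x y - t) 0 ∂(κ x))) ∂PX)
      = ∫ x, g x ∂PX := rfl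
  have hBdd : ∀ x, BddBelow (Set.range (CVaRAux.RU κ f c x)) := fun x =>
    ⟨-C, by rintro _ ⟨t, rfl⟩; exact CVaRAux.RU_lower hf hC hc x t⟩
  have hgle : ∀ x t, g x ≤ CVaRAux.RU κ f c x t := fun x t => ciInf_le (hBdd x) t
  have hgub : ∀ x, g x ≤ C := fun x =>
    (hgle x C).trans (le_of_eq (CVaRAux.RU_at_C (κ := κ) (c := c) hC x))
  have hglb : ∀ x, -C ≤ g x := fun x =>
    le_ciInf (CVaRAux.RU_lower hf hC hc x)
  -- measurability of g via rational infimum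
  have hgq : g = fun x => ⨅ q : ℚ, CVaRAux.RU κ f c x (q : ℝ) := by
    funext x
    refine le_antisymm (le_ciInf fun q => hgle x q) (le_ciInf fun t => ?_)
    refine le_of_forall_pos_le_add fun ε hε => ?_
    have hd : (0:ℝ) < ε / (1 + c) := by positivity
    obtain ⟨q, hq1, hq2⟩ := exists_rat_btwn (show t < t + ε / (1 + c) by linarith)
    have hBq : BddBelow (Set.range fun q : ℚ => CVaRAux.RU κ f c x (q : ℝ)) :=
      ⟨-C, by rintro _ ⟨s, rfl⟩; exact CVaRAux.RU_lower hf hC hc x _⟩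
    refine (ciInf_le hBq q).trans ?_
    have hlip := CVaRAux.RU_lip (κ := κ) hf hC hc x t (q : ℝ)
    have habs : |(q:ℝ) - t| ≤ ε / (1 + c) := by
      rw [abs_of_nonneg (by linarith)]; linarith
    have : (1 + c) * |(q:ℝ) - t| ≤ ε := by
      calc (1 + c) * |(q:ℝ) - t| ≤ (1 + c) * (ε / (1 + c)) :=
            mul_le_mul_of_nonneg_left habs (by linarith)
        _ = ε := by field_simp
    linarith
  have hmeasg : Measurable g := by
    rw [hgq]
    exact Measurable.iInf fun q => CVaRAux.RU_meas hf (t := fun _ => (q:ℝ)) measurable_const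
  have hginteg : Integrable g PX := by
    refine (integrable_const C).mono' hmeasg.aestronglyMeasurable ?_
    exact Filter.Eventually.of_forall fun x => by
      rw [Real.norm_eq_abs]; exact abs_le.2 ⟨hglb x, hgub x⟩
  -- bound and integrability for RU composed with a bounded selection
  have hRUbound : ∀ (t : 𝒳 → ℝ) (D : ℝ), (∀ x, |t x| ≤ D) →
      ∀ x, |CVaRAux.RU κ f c x (t x)| ≤ D + c * (|C| + D) := by
    intro t D hD x
    have hD0 : 0 ≤ D := (abs_nonneg _).trans (hD x₀)
    have h1 : 0 ≤ ∫ y, max (f x y - t x) 0 ∂(κ x) :=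
      CVaRAux.integral_inner_nonneg (κ := κ) (f := f) (t x) x
    have h2 : ∫ y, max (f x y - t x) 0 ∂(κ x) ≤ |C| + |t x| := by
      have : ∫ y, ((|C| + |t x| : ℝ)) ∂(κ x) = |C| + |t x| := by simp [measure_univ]
      rw [← this]
      refine integral_mono (CVaRAux.integrable_inner hf hC (t x) x)
        (integrable_const _) fun y => ?_
      have h3 := (abs_le.1 (hC x y)).2
      have h4 := le_abs_self C
      have h5 := neg_abs_le (t x)
      refine max_le (by linarith) (by positivity)
    have h6 := abs_le.1 (hD x)
    have h7 : c * ∫ y, max (f x y - t x) 0 ∂(κ x) ≤ c * (|C| + D) :=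
      mul_le_mul_of_nonneg_left (h2.trans (by linarith [hD x])) hc0.le
    have h8 : 0 ≤ c * ∫ y, max (f x y - t x) 0 ∂(κ x) := mul_nonneg hc0.le h1
    have h9 : 0 ≤ c * (|C| + D) := mul_nonneg hc0.le (by positivity)
    rw [CVaRAux.RU, abs_le]
    exact ⟨by linarith [h6.1], by linarith [h6.2]⟩
  have hRUinteg : ∀ (t : 𝒳 → ℝ), Measurable t → ∀ (D : ℝ), (∀ x, |t x| ≤ D) →
      Integrable (fun x => CVaRAux.RU κ f c x (t x)) PX := by
    intro t ht D hD
    refine (integrable_const (D + c * (|C| + D))).mono'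
      (CVaRAux.RU_meas hf ht).aestronglyMeasurable ?_
    exact Filter.Eventually.of_forall fun x => by
      rw [Real.norm_eq_abs]; exact hRUbound t D hD x
  -- the joint integral equals the PX-integral of RU along the selection
  have hFeq : ∀ (t : 𝒳 → ℝ), Measurable t → ∀ (D : ℝ), (∀ x, |t x| ≤ D) →
      (∫ p, (t p.1 + c * max (f p.1 p.2 - t p.1) 0) ∂(PX.compProd κ))
        = ∫ x, CVaRAux.RU κ f c x (t x) ∂PX := by
    intro t ht D hD
    have hD0 : 0 ≤ D := (abs_nonneg _).trans (hD x₀)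
    have hmeas : Measurable (fun p : 𝒳 × 𝒴 => t p.1 + c * max (f p.1 p.2 - t p.1) 0) := by
      have h1 : Measurable (fun p : 𝒳 × 𝒴 => f p.1 p.2) := hf
      exact (ht.comp measurable_fst).add
        (((h1.sub ((ht.comp measurable_fst))).max measurable_const).const_mul c)
    have hintp : Integrable (fun p : 𝒳 × 𝒴 => t p.1 + c * max (f p.1 p.2 - t p.1) 0)
        (PX.compProd κ) := by
      refine (integrable_const (D + c * (|C| + D))).mono' hmeas.aestronglyMeasurable ?_
      refine Filter.Eventually.of_forall fun p => ?_
      rw [Real.norm_eq_abs]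
      have h3 := (abs_le.1 (hC p.1 p.2)).2
      have h4 := le_abs_self C
      have h6 := abs_le.1 (hD p.1)
      have h7 : (0:ℝ) ≤ max (f p.1 p.2 - t p.1) 0 := le_max_right _ _
      have h8 : max (f p.1 p.2 - t p.1) 0 ≤ |C| + D :=
        max_le (by linarith) (by positivity)
      have h9 : c * max (f p.1 p.2 - t p.1) 0 ≤ c * (|C| + D) :=
        mul_le_mul_of_nonneg_left h8 hc0.le
      have h10 : 0 ≤ c * max (f p.1 p.2 - t p.1) 0 := mul_nonneg hc0.le h7
      have h11 : 0 ≤ c * (|C| + D) := mul_nonneg hc0.le (by positivity)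
      rw [abs_le]
      exact ⟨by linarith [h6.1], by linarith [h6.2]⟩
    rw [MeasureTheory.Measure.integral_compProd hintp]
    exact integral_congr_ae (Filter.Eventually.of_forall fun x =>
      CVaRAux.inner_integral_eq hf hC x (t x))
  -- Step A : LHS ≤ each joint objective
  have stepA : ∀ T : {t : 𝒳 → ℝ // Measurable t ∧ ∃ D, ∀ x, |t x| ≤ D},
      (∫ x, g x ∂PX) ≤ ∫ p, (T.1 p.1 + c * max (f p.1 p.2 - T.1 p.1) 0)
        ∂(PX.compProd κ) := by
    rintro ⟨t, ht, D, hD⟩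
    rw [hFeq t ht D hD]
    exact integral_mono hginteg (hRUinteg t ht D hD) fun x => hgle x (t x)
  have hNE : Nonempty {t : 𝒳 → ℝ // Measurable t ∧ ∃ D, ∀ x, |t x| ≤ D} :=
    ⟨⟨fun _ => 0, measurable_const, 0, fun x => by simp⟩⟩
  rw [hLHS]
  refine le_antisymm (le_ciInf stepA) ?_
  -- Step B : reverse inequality via ε-optimal measurable selection
  have hBddR : BddBelow (Set.range fun T : {t : 𝒳 → ℝ // Measurable t ∧ ∃ D, ∀ x, |t x| ≤ D} =>
      ∫ p, (T.1 p.1 + c * max (f p.1 p.2 - T.1 p.1) 0) ∂(PX.compProd κ)) :=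
    ⟨∫ x, g x ∂PX, by rintro _ ⟨T, rfl⟩; exact stepA T⟩
  refine le_of_forall_pos_le_add fun ε hε => ?_
  set e : ℕ → ℚ := fun n => (Denumerable.eqv ℚ).symm n with hedef
  set p : ℕ → 𝒳 → Prop := fun n x =>
    |((e n : ℚ) : ℝ)| ≤ C + 1 ∧ CVaRAux.RU κ f c x ((e n : ℚ) : ℝ) < g x + ε with hpdef
  have hex : ∀ x, ∃ n, p n x := by
    intro x
    have h1 : g x < g x + ε / 2 := by linarith
    obtain ⟨t0, ht0⟩ := exists_lt_of_ciInf_lt h1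
    set t1 : ℝ := max (-C) (min C t0) with ht1def
    have ht1b : |t1| ≤ C := by
      rw [abs_le]
      exact ⟨le_max_left _ _, max_le (by linarith) (min_le_left _ _)⟩
    have ht1 : CVaRAux.RU κ f c x t1 ≤ CVaRAux.RU κ f c x t0 := by
      rcases le_total t0 (-C) with h | h
      · have he1 : t1 = -C := by
          rw [ht1def, max_eq_left ((min_le_right C t0).trans h)]
        rw [he1]
        exact CVaRAux.RU_low hf hC hc x h
      · rcases le_total C t0 with h2 | h2
        · have he1 : t1 = C := by
            rw [ht1def, min_eq_left h2, max_eq_right (by linarith)]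
          rw [he1, CVaRAux.RU_at_C (κ := κ) (c := c) hC x, CVaRAux.RU_high hC x h2]
          exact h2
        · have he1 : t1 = t0 := by
            rw [ht1def, min_eq_right h2, max_eq_right h]
          rw [he1]
    set δ : ℝ := min 1 (ε / (2 * (1 + c))) with hδdef
    have hδ0 : 0 < δ := lt_min one_pos (by positivity)
    have hδ1 : δ ≤ 1 := min_le_left _ _
    have hδ2 : δ ≤ ε / (2 * (1 + c)) := min_le_right _ _
    obtain ⟨q, hq1, hq2⟩ := exists_rat_btwn (show t1 - δ < t1 by linarith)
    have hbq := abs_le.1 ht1b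
    have hqb : |(q:ℝ)| ≤ C + 1 := by
      rw [abs_le]; constructor <;> [linarith [hbq.1]; linarith [hbq.2]]
    have hRUq : CVaRAux.RU κ f c x (q : ℝ) < g x + ε := by
      have hlip := CVaRAux.RU_lip (κ := κ) hf hC hc x t1 (q : ℝ)
      have habs : |(q:ℝ) - t1| ≤ δ := by
        rw [abs_of_nonpos (by linarith)]; linarith
      have h5 : (1 + c) * |(q:ℝ) - t1| ≤ ε / 2 := by
        calc (1 + c) * |(q:ℝ) - t1| ≤ (1 + c) * (ε / (2 * (1 + c))) :=
              mul_le_mul_of_nonneg_left (habs.trans hδ2) (by linarith)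
          _ = ε / 2 := by field_simp
      linarith
    refine ⟨(Denumerable.eqv ℚ) q, ?_, ?_⟩
    · rw [hedef]; simp only [Equiv.symm_apply_apply]; exact hqb
    · rw [hedef]; simp only [Equiv.symm_apply_apply]; exact hRUq
  set tsel : 𝒳 → ℝ := fun x => ((e (Nat.find (hex x)) : ℚ) : ℝ) with htseldef
  have hmeasp : ∀ n, MeasurableSet {x | p n x} := by
    intro n
    by_cases hcase : |((e n : ℚ) : ℝ)| ≤ C + 1
    · have : {x | p n x} = {x | CVaRAux.RU κ f c x ((e n : ℚ) : ℝ) < g x + ε} := by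
        ext x; simp [hpdef, hcase]
      rw [this]
      exact measurableSet_lt
        (CVaRAux.RU_meas hf (t := fun _ => ((e n : ℚ) : ℝ)) measurable_const)
        (hmeasg.add measurable_const)
    · have : {x | p n x} = ∅ := by
        ext x; simp [hpdef, hcase]
      rw [this]; exact MeasurableSet.empty
  have htselm : Measurable tsel :=
    Measurable.find (f := fun n (_ : 𝒳) => ((e n : ℚ) : ℝ)) (fun n => measurable_const)
      hmeasp hex
  have htselb : ∀ x, |tsel x| ≤ C + 1 := fun x => (Nat.find_spec (hex x)).1
  have hkey : ∀ x, CVaRAux.RU κ f c x (tsel x) ≤ g x + ε := fun x =>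
    le_of_lt (Nat.find_spec (hex x)).2
  refine (ciInf_le hBddR ⟨tsel, htselm, C + 1, htselb⟩).trans ?_
  rw [hFeq tsel htselm (C + 1) htselb]
  have h9 : (∫ x, CVaRAux.RU κ f c x (tsel x) ∂PX) ≤ ∫ x, (g x + ε) ∂PX :=
    integral_mono (hRUinteg tsel htselm (C + 1) htselb)
      (hginteg.add (integrable_const ε)) hkey
  rw [integral_add hginteg (integrable_const ε), integral_const] at h9
  simpa using h9
end

section
/- CVaR of the negated variable identity: for β ∈ (0,1) and an integrable random variable ξ (with continuous distribution so that quantiles are uniquely attained), CVaR_β(−ξ) = (1/(1−β)) ( β · CVaR_{1−β}(ξ) − E[ξ] ), where CVaR is defined via the Rockafellar–Uryasev infimum formula. -/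
open MeasureTheory Real

/-- CVaR of the negated variable:
`CVaR_β(−ξ) = (1/(1−β)) (β · CVaR_{1−β}(ξ) − E[ξ])` for `ξ` with a
continuous distribution function. -/
theorem cvar_neg_identity
    {Ω : Type*} [MeasurableSpace Ω] (μ : Measure Ω) [IsProbabilityMeasure μ]
    (ξ : Ω → ℝ) (hmeas : Measurable ξ) (hint : Integrable ξ μ)
    (hcont : Continuous fun t : ℝ => (μ {ω | ξ ω ≤ t}).toReal)
    (β : ℝ) (hβ : β ∈ Set.Ioo (0 : ℝ) 1) :
    CVaR μ β (fun ω => -ξ ω)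
      = (1 / (1 - β)) * (β * CVaR μ (1 - β) ξ - ∫ ω, ξ ω ∂μ) := by
  obtain ⟨hβ0, hβ1⟩ := hβ
  have h1β : (0:ℝ) < 1 - β := by linarith
  set E : ℝ := ∫ ω, ξ ω ∂μ with hE
  -- integrability of positive parts
  have hip : ∀ s : ℝ, Integrable (fun ω => max (ξ ω - s) 0) μ := fun s =>
    (hint.sub (integrable_const s)).pos_part
  -- the integral of the positive part
  set M : ℝ → ℝ := fun s => ∫ ω, max (ξ ω - s) 0 ∂μ with hM
  have hM0 : ∀ s, 0 ≤ M s := fun s =>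
    integral_nonneg fun ω => le_max_right _ _
  have hMlb : ∀ s, E - s ≤ M s := by
    intro s
    have : ∫ ω, (ξ ω - s) ∂μ ≤ M s :=
      integral_mono (hint.sub (integrable_const s)) (hip s)
        (fun ω => le_max_left _ _)
    rwa [integral_sub hint (integrable_const s), integral_const,
      probReal_univ, smul_eq_mul, one_mul] at this
  -- the RU objective for level 1-β
  set g : ℝ → ℝ := fun s => s + (1 / β) * M s with hg
  have hgcvar : CVaR μ (1 - β) ξ = ⨅ s, g s := by
    simp only [CVaR, hg, hM, sub_sub_cancel]
  -- g is bounded below by E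
  have hgbdd : ∀ s, E ≤ g s := by
    intro s
    rcases le_total E s with h | h
    · have : 0 ≤ (1 / β) * M s :=
        mul_nonneg (by positivity) (hM0 s)
      simp only [hg]; linarith
    · have h1 : E - s ≤ M s := hMlb s
      have h2 : (1:ℝ) ≤ 1 / β := by
        rw [le_div_iff₀ hβ0]; linarith
      have h3 : E - s ≤ (1 / β) * M s := by
        calc E - s ≤ 1 * M s := by linarith
          _ ≤ (1 / β) * M s := by
              apply mul_le_mul_of_nonneg_right h2 (hM0 s)
      simp only [hg]; linarith
  have hbdd : BddBelow (Set.range g) := ⟨E, by rintro _ ⟨s, rfl⟩; exact hgbdd s⟩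
  -- pointwise identity for the negated integrand
  have hI : ∀ t : ℝ, ∫ ω, max (-ξ ω - t) 0 ∂μ = M (-t) + (-t) - E := by
    intro t
    have hpt : ∀ ω, max (-ξ ω - t) 0 = max (ξ ω - (-t)) 0 + ((-t) - ξ ω) := by
      intro ω
      rcases le_total (ξ ω) (-t) with h | h
      · rw [max_eq_left, max_eq_right] <;> [skip; linarith; linarith]
        linarith
      · rw [max_eq_right, max_eq_left] <;> [skip; linarith; linarith]
        linarith
    calc ∫ ω, max (-ξ ω - t) 0 ∂μ
        = ∫ ω, (max (ξ ω - (-t)) 0 + ((-t) - ξ ω)) ∂μ := by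
          exact integral_congr_ae (Filter.Eventually.of_forall hpt)
      _ = M (-t) + ((-t) - E) := by
          have hsub : Integrable (fun ω => (-t) - ξ ω) μ :=
            (integrable_const (-t)).sub hint
          rw [integral_add (hip (-t)) hsub,
            integral_sub (integrable_const (-t)) hint, integral_const,
            probReal_univ, smul_eq_mul, one_mul]
      _ = M (-t) + (-t) - E := by ring
  -- rewrite the objective for -ξ in terms of g
  have hobj : ∀ s : ℝ,
      (-s) + (1 / (1 - β)) * ∫ ω, max (-ξ ω - (-s)) 0 ∂μ
        = (1 / (1 - β)) * (β * g s - E) := by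
    intro s
    rw [hI (-s), neg_neg]
    simp only [hg]
    field_simp
    ring
  -- reindex the infimum by negation
  have hneg : CVaR μ β (fun ω => -ξ ω)
      = ⨅ s : ℝ, ((-s) + (1 / (1 - β)) * ∫ ω, max (-ξ ω - (-s)) 0 ∂μ) := by
    rw [CVaR, iInf, iInf]
    congr 1
    exact ((neg_surjective : Function.Surjective (Neg.neg : ℝ → ℝ)).range_comp
      (fun t => t + (1 / (1 - β)) * ∫ ω, max (-ξ ω - t) 0 ∂μ)).symm
  rw [hneg]
  have : (⨅ s : ℝ, ((-s) + (1 / (1 - β)) * ∫ ω, max (-ξ ω - (-s)) 0 ∂μ))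
      = ⨅ s : ℝ, (1 / (1 - β)) * (β * g s - E) := by
    exact iInf_congr hobj
  rw [this, hgcvar]
  -- pull the affine map out of the infimum
  have hmono : Monotone (fun x : ℝ => (1 / (1 - β)) * (β * x - E)) := by
    intro x y hxy
    have : β * x ≤ β * y := mul_le_mul_of_nonneg_left hxy hβ0.le
    apply mul_le_mul_of_nonneg_left _ (by positivity)
    linarith
  have hcontφ : ContinuousAt (fun x : ℝ => (1 / (1 - β)) * (β * x - E)) (⨅ s, g s) :=
    Continuous.continuousAt (by continuity)
  exact (hmono.map_ciInf_of_continuousAt hcontφ hbdd).symm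
end

section
/- Mean-upper-semideviation dual representation: for an integrable random variable ξ and η ∈ [0,1], E[ξ] + η E[(ξ − E[ξ])₊] = sup_{s ∈ (0,1)} { (1 − ηs) E[ξ] + η s · CVaR_{1−s}(ξ) }, where CVaR is defined via the Rockafellar–Uryasev formula. -/
open MeasureTheory Real

section Aux

variable {Ω : Type*} [MeasurableSpace Ω] (μ : Measure Ω) [IsProbabilityMeasure μ]
  (ξ : Ω → ℝ)

lemma cvar_aux_int (hint : Integrable ξ μ) (t : ℝ) :
    Integrable (fun ω => max (ξ ω - t) 0) μ :=
  (hint.sub (integrable_const t)).pos_part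

lemma cvar_aux_nonneg (t : ℝ) : 0 ≤ ∫ ω, max (ξ ω - t) 0 ∂μ :=
  integral_nonneg fun ω => le_max_right _ _

lemma cvar_aux_ge_mean (hint : Integrable ξ μ) (t : ℝ) :
    (∫ ω, ξ ω ∂μ) - t ≤ ∫ ω, max (ξ ω - t) 0 ∂μ := by
  have h := integral_mono (f := fun ω => ξ ω - t)
    (hint.sub (integrable_const t)) (cvar_aux_int μ ξ hint t)
    (fun ω => le_max_left _ _)
  rw [integral_sub hint (integrable_const t), integral_const] at h
  simpa using h

/-- Rewrite `CVaR μ (1-s) ξ` with `1-(1-s)=s`. -/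
lemma cvar_eq (s : ℝ) : CVaR μ (1 - s) ξ
    = ⨅ t : ℝ, (t + (1 / s) * ∫ ω, max (ξ ω - t) 0 ∂μ) := by
  simp [CVaR, sub_sub_cancel]

lemma cvar_bddBelow (hint : Integrable ξ μ) {s : ℝ} (hs : 0 < s) (hs1 : s ≤ 1) (t : ℝ) :
    (∫ ω, ξ ω ∂μ) ≤ t + (1 / s) * ∫ ω, max (ξ ω - t) 0 ∂μ := by
  have h1 := cvar_aux_ge_mean μ ξ hint t
  have h2 := cvar_aux_nonneg μ ξ t
  have h3 : 1 ≤ 1 / s := one_le_one_div hs hs1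
  have h4 : 1 * (∫ ω, max (ξ ω - t) 0 ∂μ) ≤ (1 / s) * ∫ ω, max (ξ ω - t) 0 ∂μ :=
    mul_le_mul_of_nonneg_right h3 h2
  linarith

lemma cvar_ge_mean (hint : Integrable ξ μ) {s : ℝ} (hs : 0 < s) (hs1 : s ≤ 1) :
    (∫ ω, ξ ω ∂μ) ≤ CVaR μ (1 - s) ξ := by
  rw [cvar_eq]
  exact le_ciInf (cvar_bddBelow μ ξ hint hs hs1)

lemma cvar_le (hint : Integrable ξ μ) {s : ℝ} (hs : 0 < s) (hs1 : s ≤ 1) :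
    CVaR μ (1 - s) ξ ≤ (∫ ω, ξ ω ∂μ)
      + (1 / s) * ∫ ω, max (ξ ω - ∫ ω', ξ ω' ∂μ) 0 ∂μ := by
  rw [cvar_eq]
  exact ciInf_le ⟨∫ ω, ξ ω ∂μ, by rintro x ⟨t, rfl⟩; exact cvar_bddBelow μ ξ hint hs hs1 t⟩ _

/-- Key pointwise-derived bound: with `p = μ {ξ > m}`,
`E[(ξ-t)₊] ≥ D + (m-t)·p`. -/
lemma cvar_aux_key (hmeas : Measurable ξ) (hint : Integrable ξ μ) (t : ℝ) :
    (∫ ω, max (ξ ω - ∫ ω', ξ ω' ∂μ) 0 ∂μ)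
      + ((∫ ω, ξ ω ∂μ) - t) * (μ {ω | (∫ ω', ξ ω' ∂μ) < ξ ω}).toReal
      ≤ ∫ ω, max (ξ ω - t) 0 ∂μ := by
  set m := ∫ ω, ξ ω ∂μ with hm
  have hS : MeasurableSet {ω | m < ξ ω} := measurableSet_lt measurable_const hmeas
  have hpt : ∀ ω, max (ξ ω - m) 0 + Set.indicator {ω | m < ξ ω} (fun _ => m - t) ω
      ≤ max (ξ ω - t) 0 := by
    intro ω
    by_cases h : m < ξ ω
    · rw [Set.indicator_of_mem (show ω ∈ {ω | m < ξ ω} from h),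
        max_eq_left (by linarith : (0:ℝ) ≤ ξ ω - m)]
      exact le_max_of_le_left (by linarith)
    · push_neg at h
      rw [Set.indicator_of_notMem (show ω ∉ {ω | m < ξ ω} by simpa using h),
        max_eq_right (by linarith : ξ ω - m ≤ 0)]
      simpa using le_max_right (ξ ω - t) 0
  have hind : Integrable (Set.indicator {ω | m < ξ ω} (fun _ => m - t)) μ :=
    (integrable_const (m - t)).indicator hS
  have h := integral_mono
    (f := fun ω => max (ξ ω - m) 0 + Set.indicator {ω | m < ξ ω} (fun _ => m - t) ω)
    ((cvar_aux_int μ ξ hint m).add hind) (cvar_aux_int μ ξ hint t) hpt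
  rw [integral_add (cvar_aux_int μ ξ hint m) hind, integral_indicator_const _ hS, measureReal_def] at h
  simpa [smul_eq_mul, mul_comm] using h

lemma cvar_ge_strong (hmeas : Measurable ξ) (hint : Integrable ξ μ)
    (hp : 0 < (μ {ω | (∫ ω', ξ ω' ∂μ) < ξ ω}).toReal) :
    (∫ ω, ξ ω ∂μ)
      + (1 / (μ {ω | (∫ ω', ξ ω' ∂μ) < ξ ω}).toReal)
        * ∫ ω, max (ξ ω - ∫ ω', ξ ω' ∂μ) 0 ∂μ
      ≤ CVaR μ (1 - (μ {ω | (∫ ω', ξ ω' ∂μ) < ξ ω}).toReal) ξ := by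
  set m := ∫ ω, ξ ω ∂μ with hm
  set p := (μ {ω | m < ξ ω}).toReal with hpdef
  set D := ∫ ω, max (ξ ω - m) 0 ∂μ with hD
  rw [cvar_eq]
  refine le_ciInf fun t => ?_
  have hkey : D + (m - t) * p ≤ ∫ ω, max (ξ ω - t) 0 ∂μ := cvar_aux_key μ ξ hmeas hint t
  have h2 : (1 / p) * (D + (m - t) * p) ≤ (1 / p) * ∫ ω, max (ξ ω - t) 0 ∂μ :=
    mul_le_mul_of_nonneg_left hkey (by positivity)
  have h3 : (1 / p) * (D + (m - t) * p) = (1 / p) * D + (m - t) := by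
    field_simp
  linarith

end Aux

/-- Dual (Kusuoka) representation of the mean-upper-semideviation of order 1:
`E[ξ] + η E[(ξ − E[ξ])₊] = sup_{s∈(0,1)} { (1 − ηs) E[ξ] + ηs CVaR_{1−s}(ξ) }`. -/
theorem mean_upper_semideviation_dual
    {Ω : Type*} [MeasurableSpace Ω] (μ : Measure Ω) [IsProbabilityMeasure μ]
    (ξ : Ω → ℝ) (hmeas : Measurable ξ) (hint : Integrable ξ μ)
    (η : ℝ) (hη : η ∈ Set.Icc (0 : ℝ) 1) :
    (∫ ω, ξ ω ∂μ) + η * ∫ ω, max (ξ ω - ∫ ω', ξ ω' ∂μ) 0 ∂μ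
      = ⨆ s : Set.Ioo (0 : ℝ) 1,
          ((1 - η * s.1) * (∫ ω, ξ ω ∂μ) + η * s.1 * CVaR μ (1 - s.1) ξ) := by
  obtain ⟨hη0, hη1⟩ := hη
  set m := ∫ ω, ξ ω ∂μ with hm
  set D := ∫ ω, max (ξ ω - m) 0 ∂μ with hD
  have hDnn : 0 ≤ D := cvar_aux_nonneg μ ξ m
  -- upper bound on every term of the sup
  have key_le : ∀ s : Set.Ioo (0 : ℝ) 1,
      (1 - η * s.1) * m + η * s.1 * CVaR μ (1 - s.1) ξ ≤ m + η * D := by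
    rintro ⟨s, hs0, hs1⟩
    have hC : CVaR μ (1 - s) ξ ≤ m + (1 / s) * D := cvar_le μ ξ hint hs0 hs1.le
    have h1 : η * s * CVaR μ (1 - s) ξ ≤ η * s * (m + (1 / s) * D) :=
      mul_le_mul_of_nonneg_left hC (by positivity)
    have h2 : η * s * (m + (1 / s) * D) = η * s * m + η * D := by
      field_simp
    simp only
    linarith
  have hne : Nonempty (Set.Ioo (0 : ℝ) 1) := ⟨⟨1/2, by norm_num⟩⟩
  have hbdd : BddAbove (Set.range fun s : Set.Ioo (0 : ℝ) 1 =>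
      (1 - η * s.1) * m + η * s.1 * CVaR μ (1 - s.1) ξ) :=
    ⟨m + η * D, by rintro x ⟨s, rfl⟩; exact key_le s⟩
  -- existence of a good `s`
  have key_ge : ∃ s : Set.Ioo (0 : ℝ) 1,
      m + η * D ≤ (1 - η * s.1) * m + η * s.1 * CVaR μ (1 - s.1) ξ := by
    set p := (μ {ω | m < ξ ω}).toReal with hpdef
    have hS : MeasurableSet {ω | m < ξ ω} := measurableSet_lt measurable_const hmeas
    by_cases hp : 0 < p
    · -- p < 1
      have hple : p ≤ 1 := by
        have h1 : μ {ω | m < ξ ω} ≤ 1 := prob_le_one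
        have := ENNReal.toReal_mono (by simp) h1
        simpa using this
      have hp1 : p < 1 := by
        rcases lt_or_eq_of_le hple with h | h
        · exact h
        · exfalso
          have hμ1 : μ {ω | m < ξ ω} = 1 := (ENNReal.toReal_eq_one_iff _).1 h
          have hae : ∀ᵐ ω ∂μ, m < ξ ω := by
            rw [ae_iff]
            have : {ω | ¬ m < ξ ω} = {ω | m < ξ ω}ᶜ := by ext ω; simp
            rw [this, measure_compl hS (measure_ne_top _ _), hμ1]
            simp
          have hzero : ∫ ω, (ξ ω - m) ∂μ = 0 := by
            rw [integral_sub hint (integrable_const m), integral_const]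
            simp [← hm]
          have hnn : 0 ≤ᵐ[μ] fun ω => ξ ω - m := hae.mono fun ω h => by simp; linarith
          have heq0 : (fun ω => ξ ω - m) =ᵐ[μ] 0 :=
            (integral_eq_zero_iff_of_nonneg_ae hnn (hint.sub (integrable_const m))).1 hzero
          obtain ⟨ω, h1, h2⟩ := (hae.and heq0).exists
          simp at h2
          linarith
      refine ⟨⟨p, hp, hp1⟩, ?_⟩
      have hC : m + (1 / p) * D ≤ CVaR μ (1 - p) ξ := cvar_ge_strong μ ξ hmeas hint hp
      have h1 : η * p * (m + (1 / p) * D) ≤ η * p * CVaR μ (1 - p) ξ :=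
        mul_le_mul_of_nonneg_left hC (by positivity)
      have h2 : η * p * (m + (1 / p) * D) = η * p * m + η * D := by
        field_simp
      simp only
      linarith
    · -- p = 0 : then D = 0 and any s works; take s = 1/2
      have hp0 : μ {ω | m < ξ ω} = 0 := by
        have := not_lt.1 hp
        have h := ENNReal.toReal_nonneg (a := μ {ω | m < ξ ω})
        have : p = 0 := le_antisymm (not_lt.1 hp) h
        rw [hpdef] at this
        exact (ENNReal.toReal_eq_zero_iff _).1 this |>.resolve_right (measure_ne_top _ _)
      have hae : ∀ᵐ ω ∂μ, ξ ω ≤ m := by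
        rw [ae_iff]
        simpa [not_le] using hp0
      have hD0 : D = 0 := by
        rw [hD]
        exact (integral_eq_zero_iff_of_nonneg_ae (f := fun ω => max (ξ ω - m) 0)
          (Filter.Eventually.of_forall fun ω => le_max_right _ _)
          (cvar_aux_int μ ξ hint m)).2
          (hae.mono fun ω h => by
            simp only [Pi.zero_apply]
            exact max_eq_right (by linarith))
      refine ⟨⟨1/2, by norm_num, by norm_num⟩, ?_⟩
      have hC : m ≤ CVaR μ (1 - (1/2 : ℝ)) ξ :=
        cvar_ge_mean μ ξ hint (by norm_num) (by norm_num)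
      have h1 : η * (1/2) * m ≤ η * (1/2) * CVaR μ (1 - (1/2 : ℝ)) ξ :=
        mul_le_mul_of_nonneg_left hC (by positivity)
      simp only
      rw [hD0]
      linarith
  apply le_antisymm
  · obtain ⟨s, hs⟩ := key_ge
    exact hs.trans (le_ciSup hbdd s)
  · exact ciSup_le key_le
end

section
/- Representer theorem in an RKHS: let H be a reproducing kernel Hilbert space on 𝒳 with kernel k, fix points x₁,…,x_N ∈ 𝒳, let W : ℝ^N → ℝ be arbitrary and R : ℝ₊ → ℝ₊ monotonically increasing. If the problem min_{h∈H} W(h(x₁),…,h(x_N)) + R(‖h‖_H) attains its minimum, then it attains its minimum at some h* of the form h*(·) = Σ_{i=1}^N αᵢ k(xᵢ, ·) with αᵢ ∈ ℝ. -/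
open scoped RealInnerProductSpace

/-- Representer theorem: if the regularized empirical objective over an RKHS
(realized by a linear map `ι : H → (𝒳 → ℝ)` and feature map `K` with the
reproducing property) attains its minimum, then it attains its minimum at a
finite linear combination of the kernel sections `K (x i)`. -/
theorem representer_theorem
    {𝒳 H : Type*} [NormedAddCommGroup H] [InnerProductSpace ℝ H]
    [CompleteSpace H]
    (ι : H →ₗ[ℝ] (𝒳 → ℝ)) (K : 𝒳 → H)
    (hrepr : ∀ (h : H) (x : 𝒳), ι h x = ⟪h, K x⟫)
    (N : ℕ) (x : Fin N → 𝒳) (W : (Fin N → ℝ) → ℝ) (R : ℝ → ℝ)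
    (hR : MonotoneOn R (Set.Ici 0))
    (h₀ : H)
    (hmin : ∀ h : H, W (fun i => ι h₀ (x i)) + R ‖h₀‖
      ≤ W (fun i => ι h (x i)) + R ‖h‖) :
    ∃ α : Fin N → ℝ, ∀ h : H,
      W (fun j => ι (∑ i, α i • K (x i)) (x j)) + R ‖∑ i, α i • K (x i)‖
        ≤ W (fun j => ι h (x j)) + R ‖h‖ := by
  set S : Submodule ℝ H := Submodule.span ℝ (Set.range fun i => K (x i)) with hS
  haveI : FiniteDimensional ℝ S :=
    FiniteDimensional.span_of_finite ℝ (Set.finite_range _)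
  set g : H := (S.orthogonalProjectionOnto h₀ : H) with hg
  have hgS : g ∈ S := (S.orthogonalProjectionOnto h₀).2
  obtain ⟨α, hα⟩ := (Finsupp.mem_span_range_iff_exists_finsupp.mp hgS)
  -- convert to a plain function sum
  have hsum : ∑ i, (α : Fin N → ℝ) i • K (x i) = g := by
    rw [← hα, Finsupp.sum_fintype]
    intro i; simp
  refine ⟨α, fun h => ?_⟩
  rw [hsum]
  have hinner : ∀ j, ι g (x j) = ι h₀ (x j) := by
    intro j
    have hKmem : K (x j) ∈ S := Submodule.subset_span ⟨j, rfl⟩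
    have this : ⟪h₀ - g, K (x j)⟫ = 0 := Submodule.starProjection_inner_eq_zero (K := S) h₀ (K (x j)) hKmem
    rw [inner_sub_left] at this
    rw [hrepr, hrepr]
    linarith
  have hnorm : ‖g‖ ≤ ‖h₀‖ := by
    have h1 : ‖h₀‖ ^ 2 = ‖g‖ ^ 2 + ‖h₀ - g‖ ^ 2 := by
      have horth : ⟪g, h₀ - g⟫ = 0 := by
        rw [real_inner_comm]
        exact Submodule.starProjection_inner_eq_zero (K := S) h₀ g hgS
      have := norm_add_sq_real g (h₀ - g)
      simp [horth] at this
      linarith [this]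
    nlinarith [norm_nonneg g, norm_nonneg h₀, sq_nonneg ‖h₀ - g‖]
  have hW : (fun j => ι g (x j)) = fun j => ι h₀ (x j) := funext hinner
  calc W (fun j => ι g (x j)) + R ‖g‖
      = W (fun j => ι h₀ (x j)) + R ‖g‖ := by rw [hW]
    _ ≤ W (fun j => ι h₀ (x j)) + R ‖h₀‖ := by
        gcongr
        exact hR (norm_nonneg g) (norm_nonneg h₀) hnorm
    _ ≤ W (fun j => ι h (x j)) + R ‖h‖ := hmin h
end

section
/- Closed-form CVaR-optimal newsvendor order: for the piecewise-linear cost c(z,y) = h(z−y)₊ + b(y−z)₊ with h,b > 0, demand Y with continuous strictly increasing CDF F, and β ∈ (0,1), the minimizer of z ↦ CVaR_β(c(z,Y)) is z* = (h/(h+b)) F^{-1}( b(1−β)/(h+b) ) + (b/(h+b)) F^{-1}( (hβ+b)/(h+b) ). -/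
open MeasureTheory Real

lemma newsvendor_aux_integrable {Ω : Type*} [MeasurableSpace Ω] (μ : Measure Ω)
    [IsProbabilityMeasure μ] (Y : Ω → ℝ) (hYm : Measurable Y) (hYint : Integrable Y μ)
    (h b w t : ℝ) (hh : 0 < h) (hb : 0 < b) :
    Integrable (fun ω => max (h * max (w - Y ω) 0 + b * max (Y ω - w) 0 - t) 0) μ := by
  have hmeas : Measurable fun ω => max (h * max (w - Y ω) 0 + b * max (Y ω - w) 0 - t) 0 := by
    fun_prop
  refine ((hYint.abs.const_mul (h + b)).add (integrable_const ((h + b) * |w| + |t|))).mono'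
    hmeas.aestronglyMeasurable (ae_of_all _ fun ω => ?_)
  simp only [Pi.add_apply]
  rw [Real.norm_eq_abs, abs_of_nonneg (le_max_right _ _)]
  have h1 : max (w - Y ω) 0 ≤ |w| + |Y ω| :=
    max_le (by linarith [le_abs_self w, neg_abs_le (Y ω)]) (by positivity)
  have h2 : max (Y ω - w) 0 ≤ |w| + |Y ω| :=
    max_le (by linarith [le_abs_self (Y ω), neg_abs_le w]) (by positivity)
  have h3 := mul_le_mul_of_nonneg_left h1 hh.le
  have h4 := mul_le_mul_of_nonneg_left h2 hb.le
  apply max_le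
  · nlinarith [le_abs_self t, neg_abs_le t, abs_nonneg (Y ω), abs_nonneg w]
  · nlinarith [abs_nonneg (Y ω), abs_nonneg w, abs_nonneg t]

set_option maxHeartbeats 1600000 in
lemma newsvendor_key {Ω : Type*} [MeasurableSpace Ω] (μ : Measure Ω)
    [IsProbabilityMeasure μ] (Y : Ω → ℝ) (hYm : Measurable Y) (hYint : Integrable Y μ)
    (h b β q1 q2 zs ts : ℝ) (hh : 0 < h) (hb : 0 < b) (hβ0 : 0 < β) (hβ1 : β < 1)
    (hq12 : q1 ≤ q2)
    (hzs : zs = h / (h + b) * q1 + b / (h + b) * q2)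
    (hts : ts = h * b * (q2 - q1) / (h + b))
    (hm1 : (μ {ω | Y ω ≤ q1}).toReal = b * (1 - β) / (h + b))
    (hm2 : (μ {ω | Y ω ≤ q2}).toReal = (h * β + b) / (h + b)) :
    ∀ w t : ℝ,
      ts + 1 / (1 - β) * ∫ ω, max (h * max (zs - Y ω) 0 + b * max (Y ω - zs) 0 - ts) 0 ∂μ
      ≤ t + 1 / (1 - β) * ∫ ω, max (h * max (w - Y ω) 0 + b * max (Y ω - w) 0 - t) 0 ∂μ := by
  have hhb : (0:ℝ) < h + b := by linarith
  have h1β : (0:ℝ) < 1 - β := by linarith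
  have hts1 : ts = h * (zs - q1) := by rw [hts, hzs]; field_simp; ring
  have hts2 : ts = b * (q2 - zs) := by rw [hts, hzs]; field_simp; ring
  have hts0 : 0 ≤ ts := by
    rw [hts]
    apply div_nonneg _ hhb.le
    exact mul_nonneg (mul_pos hh hb).le (by linarith)
  have hq1zs : q1 ≤ zs := by nlinarith
  have hzsq2 : zs ≤ q2 := by nlinarith
  intro w t
  set A : ℝ := h * (w - zs) - (t - ts) with hA
  set Cc : ℝ := b * (zs - w) - (t - ts) with hC
  set ψ : Ω → ℝ := fun ω => ({ω | Y ω ≤ q1}).indicator (fun _ => A) ω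
      + ({ω | q2 < Y ω}).indicator (fun _ => Cc) ω with hψ
  have hmeas1 : MeasurableSet {ω | Y ω ≤ q1} := hYm measurableSet_Iic
  have hmeas2 : MeasurableSet {ω | q2 < Y ω} := hYm measurableSet_Ioi
  have intψ : Integrable ψ μ :=
    ((integrable_const A).indicator hmeas1).add ((integrable_const Cc).indicator hmeas2)
  have intStar := newsvendor_aux_integrable μ Y hYm hYint h b zs ts hh hb
  have intW := newsvendor_aux_integrable μ Y hYm hYint h b w t hh hb
  have hpt : ∀ ω, max (h * max (zs - Y ω) 0 + b * max (Y ω - zs) 0 - ts) 0 + ψ ω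
      ≤ max (h * max (w - Y ω) 0 + b * max (Y ω - w) 0 - t) 0 := by
    intro ω
    have r1 : h * (w - Y ω) ≤ h * max (w - Y ω) 0 :=
      mul_le_mul_of_nonneg_left (le_max_left _ _) hh.le
    have r2 : (0:ℝ) ≤ b * max (Y ω - w) 0 := mul_nonneg hb.le (le_max_right _ _)
    have r3 : b * (Y ω - w) ≤ b * max (Y ω - w) 0 :=
      mul_le_mul_of_nonneg_left (le_max_left _ _) hb.le
    have r4 : (0:ℝ) ≤ h * max (w - Y ω) 0 := mul_nonneg hh.le (le_max_right _ _)
    rcases le_or_gt (Y ω) q1 with hc1 | hc1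
    · have e1 : ψ ω = A := by
        have m1 : ω ∈ {ω | Y ω ≤ q1} := hc1
        have m2 : ω ∉ {ω | q2 < Y ω} := by
          simp only [Set.mem_setOf_eq, not_lt]; linarith
        simp [hψ, Set.indicator_of_mem m1, Set.indicator_of_notMem m2]
      have e2 : max (zs - Y ω) 0 = zs - Y ω := max_eq_left (by linarith)
      have e3 : max (Y ω - zs) 0 = 0 := max_eq_right (by linarith)
      rw [e1, e2, e3]
      have e4 : max (h * (zs - Y ω) + b * 0 - ts) 0 = h * (zs - Y ω) + b * 0 - ts :=
        max_eq_left (by nlinarith [mul_le_mul_of_nonneg_left hc1 hh.le])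
      rw [e4]
      calc h * (zs - Y ω) + b * 0 - ts + A = h * (w - Y ω) - t := by rw [hA]; ring
        _ ≤ h * max (w - Y ω) 0 + b * max (Y ω - w) 0 - t := by linarith
        _ ≤ max (h * max (w - Y ω) 0 + b * max (Y ω - w) 0 - t) 0 := le_max_left _ _
    rcases le_or_gt (Y ω) q2 with hc2 | hc2
    · have e1 : ψ ω = 0 := by
        have m1 : ω ∉ {ω | Y ω ≤ q1} := by
          simp only [Set.mem_setOf_eq, not_le]; linarith
        have m2 : ω ∉ {ω | q2 < Y ω} := by
          simp only [Set.mem_setOf_eq, not_lt]; linarith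
        simp [hψ, Set.indicator_of_notMem m1, Set.indicator_of_notMem m2]
      have e4 : max (h * max (zs - Y ω) 0 + b * max (Y ω - zs) 0 - ts) 0 = 0 := by
        apply max_eq_right
        rcases le_total (Y ω) zs with hyz | hyz
        · have e2 : max (zs - Y ω) 0 = zs - Y ω := max_eq_left (by linarith)
          have e3 : max (Y ω - zs) 0 = 0 := max_eq_right (by linarith)
          rw [e2, e3]
          nlinarith [mul_le_mul_of_nonneg_left hc1.le hh.le]
        · have e2 : max (zs - Y ω) 0 = 0 := max_eq_right (by linarith)
          have e3 : max (Y ω - zs) 0 = Y ω - zs := max_eq_left (by linarith)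
          rw [e2, e3]
          nlinarith [mul_le_mul_of_nonneg_left hc2 hb.le]
      rw [e1, e4]
      simpa using le_max_right (h * max (w - Y ω) 0 + b * max (Y ω - w) 0 - t) 0
    · have e1 : ψ ω = Cc := by
        have m1 : ω ∉ {ω | Y ω ≤ q1} := by
          simp only [Set.mem_setOf_eq, not_le]; linarith
        have m2 : ω ∈ {ω | q2 < Y ω} := hc2
        simp [hψ, Set.indicator_of_notMem m1, Set.indicator_of_mem m2]
      have e2 : max (zs - Y ω) 0 = 0 := max_eq_right (by linarith)
      have e3 : max (Y ω - zs) 0 = Y ω - zs := max_eq_left (by linarith)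
      rw [e1, e2, e3]
      have e4 : max (h * 0 + b * (Y ω - zs) - ts) 0 = h * 0 + b * (Y ω - zs) - ts :=
        max_eq_left (by nlinarith [mul_le_mul_of_nonneg_left hc2.le hb.le])
      rw [e4]
      calc h * 0 + b * (Y ω - zs) - ts + Cc = b * (Y ω - w) - t := by rw [hC]; ring
        _ ≤ h * max (w - Y ω) 0 + b * max (Y ω - w) 0 - t := by linarith
        _ ≤ max (h * max (w - Y ω) 0 + b * max (Y ω - w) 0 - t) 0 := le_max_left _ _
  have hint1 : (∫ ω, (max (h * max (zs - Y ω) 0 + b * max (Y ω - zs) 0 - ts) 0 + ψ ω) ∂μ)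
      ≤ ∫ ω, max (h * max (w - Y ω) 0 + b * max (Y ω - w) 0 - t) 0 ∂μ :=
    integral_mono (intStar.add intψ) intW hpt
  rw [integral_add intStar intψ] at hint1
  have hm2' : (μ {ω | q2 < Y ω}).toReal = h * (1 - β) / (h + b) := by
    have hcompl : {ω | q2 < Y ω} = ({ω | Y ω ≤ q2})ᶜ := by
      ext ω; simp [not_le]
    have hms : MeasurableSet {ω | Y ω ≤ q2} := hYm measurableSet_Iic
    rw [hcompl, measure_compl hms (measure_ne_top μ _), measure_univ,
      ENNReal.toReal_sub_of_le prob_le_one ENNReal.one_ne_top, ENNReal.toReal_one, hm2]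
    field_simp
    ring
  have hψint : ∫ ω, ψ ω ∂μ
      = A * (b * (1 - β) / (h + b)) + Cc * (h * (1 - β) / (h + b)) := by
    rw [hψ, integral_add ((integrable_const A).indicator hmeas1)
      ((integrable_const Cc).indicator hmeas2),
      integral_indicator_const A hmeas1, integral_indicator_const Cc hmeas2,
      measureReal_def, measureReal_def, hm1, hm2', smul_eq_mul, smul_eq_mul]
    ring
  have e5 : 1 / (1 - β) * ∫ ω, ψ ω ∂μ = ts - t := by
    rw [hψint, hA, hC]
    field_simp
    ring
  have hkpos : (0:ℝ) < 1 / (1 - β) := by positivity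
  have e6 := mul_le_mul_of_nonneg_left hint1 hkpos.le
  rw [mul_add] at e6
  linarith

/-- Closed-form CVaR-optimal newsvendor order (Gotoh–Takano): for the cost
`c(z,y) = h(z−y)₊ + b(y−z)₊` and demand with continuous strictly increasing
CDF `F`, the order
`z* = (h/(h+b)) F⁻¹(b(1−β)/(h+b)) + (b/(h+b)) F⁻¹((hβ+b)/(h+b))`
minimizes `z ↦ CVaR_β(c(z,Y))`. -/
theorem cvar_newsvendor_optimal_order
    {Ω : Type*} [MeasurableSpace Ω] (μ : Measure Ω) [IsProbabilityMeasure μ]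
    (Y : Ω → ℝ) (hYm : Measurable Y) (hYint : Integrable Y μ)
    (F : ℝ → ℝ) (hF : ∀ t, F t = (μ {ω | Y ω ≤ t}).toReal)
    (hFc : Continuous F) (hFsm : StrictMono F)
    (Finv : ℝ → ℝ) (hFinv : ∀ p ∈ Set.Ioo (0 : ℝ) 1, F (Finv p) = p)
    (h b β : ℝ) (hh : 0 < h) (hb : 0 < b) (hβ : β ∈ Set.Ioo (0 : ℝ) 1) :
    ∀ z : ℝ,
      CVaR μ β (fun ω =>
          h * max ((h / (h + b)) * Finv (b * (1 - β) / (h + b))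
              + (b / (h + b)) * Finv ((h * β + b) / (h + b)) - Y ω) 0
          + b * max (Y ω - ((h / (h + b)) * Finv (b * (1 - β) / (h + b))
              + (b / (h + b)) * Finv ((h * β + b) / (h + b)))) 0)
        ≤ CVaR μ β (fun ω => h * max (z - Y ω) 0 + b * max (Y ω - z) 0) := by
  intro z
  obtain ⟨hβ0, hβ1⟩ := hβ
  have hhb : (0:ℝ) < h + b := by linarith
  have h1β : (0:ℝ) < 1 - β := by linarith
  have hp1mem : b * (1 - β) / (h + b) ∈ Set.Ioo (0 : ℝ) 1 := by
    constructor
    · exact div_pos (by nlinarith) hhb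
    · rw [div_lt_one hhb]; nlinarith
  have hp2mem : (h * β + b) / (h + b) ∈ Set.Ioo (0 : ℝ) 1 := by
    constructor
    · exact div_pos (by nlinarith) hhb
    · rw [div_lt_one hhb]; nlinarith
  have hFq1 : F (Finv (b * (1 - β) / (h + b))) = b * (1 - β) / (h + b) := hFinv _ hp1mem
  have hFq2 : F (Finv ((h * β + b) / (h + b))) = (h * β + b) / (h + b) := hFinv _ hp2mem
  have hq12 : Finv (b * (1 - β) / (h + b)) ≤ Finv ((h * β + b) / (h + b)) := by
    have hlt : F (Finv (b * (1 - β) / (h + b))) < F (Finv ((h * β + b) / (h + b))) := by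
      rw [hFq1, hFq2]
      have hnum : b * (1 - β) < h * β + b := by nlinarith
      exact (div_lt_div_iff_of_pos_right hhb).mpr hnum
    exact (hFsm.lt_iff_lt.mp hlt).le
  have hm1 : (μ {ω | Y ω ≤ Finv (b * (1 - β) / (h + b))}).toReal = b * (1 - β) / (h + b) := by
    rw [← hF _, hFq1]
  have hm2 : (μ {ω | Y ω ≤ Finv ((h * β + b) / (h + b))}).toReal = (h * β + b) / (h + b) := by
    rw [← hF _, hFq2]
  have key := newsvendor_key μ Y hYm hYint h b β
    (Finv (b * (1 - β) / (h + b))) (Finv ((h * β + b) / (h + b)))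
    (h / (h + b) * Finv (b * (1 - β) / (h + b)) + b / (h + b) * Finv ((h * β + b) / (h + b)))
    (h * b * (Finv ((h * β + b) / (h + b)) - Finv (b * (1 - β) / (h + b))) / (h + b))
    hh hb hβ0 hβ1 hq12 rfl rfl hm1 hm2
  unfold CVaR
  beta_reduce
  have hbdd : BddBelow (Set.range fun u : ℝ =>
      u + 1 / (1 - β) * ∫ ω, max (h * max ((h / (h + b) * Finv (b * (1 - β) / (h + b)) + b / (h + b) * Finv ((h * β + b) / (h + b))) - Y ω) 0 + b * max (Y ω - (h / (h + b) * Finv (b * (1 - β) / (h + b)) + b / (h + b) * Finv ((h * β + b) / (h + b)))) 0 - u) 0 ∂μ) := by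
    refine ⟨((h * b * (Finv ((h * β + b) / (h + b)) - Finv (b * (1 - β) / (h + b))) / (h + b)) + 1 / (1 - β) * ∫ ω, max (h * max ((h / (h + b) * Finv (b * (1 - β) / (h + b)) + b / (h + b) * Finv ((h * β + b) / (h + b))) - Y ω) 0 + b * max (Y ω - (h / (h + b) * Finv (b * (1 - β) / (h + b)) + b / (h + b) * Finv ((h * β + b) / (h + b)))) 0 - (h * b * (Finv ((h * β + b) / (h + b)) - Finv (b * (1 - β) / (h + b))) / (h + b))) 0 ∂μ), ?_⟩
    rintro x ⟨u, rfl⟩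
    exact key (h / (h + b) * Finv (b * (1 - β) / (h + b)) + b / (h + b) * Finv ((h * β + b) / (h + b))) u
  have h1 : (⨅ u : ℝ,
      u + 1 / (1 - β) * ∫ ω, max (h * max ((h / (h + b) * Finv (b * (1 - β) / (h + b)) + b / (h + b) * Finv ((h * β + b) / (h + b))) - Y ω) 0 + b * max (Y ω - (h / (h + b) * Finv (b * (1 - β) / (h + b)) + b / (h + b) * Finv ((h * β + b) / (h + b)))) 0 - u) 0 ∂μ)
      ≤ ((h * b * (Finv ((h * β + b) / (h + b)) - Finv (b * (1 - β) / (h + b))) / (h + b)) + 1 / (1 - β) * ∫ ω, max (h * max ((h / (h + b) * Finv (b * (1 - β) / (h + b)) + b / (h + b) * Finv ((h * β + b) / (h + b))) - Y ω) 0 + b * max (Y ω - (h / (h + b) * Finv (b * (1 - β) / (h + b)) + b / (h + b) * Finv ((h * β + b) / (h + b)))) 0 - (h * b * (Finv ((h * β + b) / (h + b)) - Finv (b * (1 - β) / (h + b))) / (h + b))) 0 ∂μ) := ciInf_le hbdd (h * b * (Finv ((h * β + b) / (h + b)) - Finv (b * (1 - β) / (h + b))) / (h + b))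
  exact le_ciInf fun t => le_trans h1 (key z t)
end
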